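/- arXiv:math-ph/0406038 — 4 statements merged into one kernel-verified Lean document; each statement's English description precedes it below -/
import Mathlib

section
/- Define Z(L,s) for nonnegative integers L, s by: Z(L,s) is the sum of q^(α_1 + α_3 + ⋯ + α_{2n-1}) over all strictly increasing integer sequences 0 ≤ α_1 < α_2 < ⋯ < α_{2n} ≤ L such that ∑_{k=1}^n (α_{2k}-α_{2k-1}) = s (here n ranges over all nonnegative integers; for n = 0 the empty sequence contributes 1 when s = 0). Then Z(L,s) satisfies the recursion Z(L,s) = Z(L-1,s) + ∑_{k=1}^s q^(L-k) · Z(L-k-1, s-k) for L ≥ 1 and s ≥ 1. -/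
attribute [local instance] Classical.propDecidable

/-- The formal variable `q`. -/
noncomputable def q : RatFunc ℚ := RatFunc.X

/-- The Gaussian (q-)binomial coefficient `[n choose m]_q`. -/
noncomputable def qb (n m : ℤ) : RatFunc ℚ :=
  if 0 ≤ m ∧ m ≤ n then
    (∏ k ∈ Finset.Icc (1 : ℤ) n, (1 - q ^ k)) /
      ((∏ k ∈ Finset.Icc (1 : ℤ) m, (1 - q ^ k)) *
        (∏ k ∈ Finset.Icc (1 : ℤ) (n - m), (1 - q ^ k)))
  else 0

/-- The index `2k` (0-based), i.e. the odd-numbered entry `α_{2k+1}` in 1-based numbering. -/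
def evenIdx {n : ℕ} (k : Fin n) : Fin (2 * n) := ⟨2 * k, by have := k.isLt; omega⟩

/-- The index `2k+1` (0-based), i.e. the even-numbered entry `α_{2k+2}` in 1-based numbering. -/
def oddIdx {n : ℕ} (k : Fin n) : Fin (2 * n) := ⟨2 * k + 1, by have := k.isLt; omega⟩

/-- The number of balls `∑_{k=1}^n (α_{2k} - α_{2k-1})` of the state encoded by the
strictly increasing sequence `A = (α_1, …, α_{2n})` of wall positions in `{0,…,L}`. -/
def balls {L n : ℕ} (A : Fin (2 * n) → Fin (L + 1)) : ℕ :=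
  ∑ k : Fin n, ((A (oddIdx k) : ℕ) - (A (evenIdx k) : ℕ))

/-- The energy `α_1 + α_3 + ⋯ + α_{2n-1}` (sum of the odd-indexed entries). -/
def energy {L n : ℕ} (A : Fin (2 * n) → Fin (L + 1)) : ℕ :=
  ∑ k : Fin n, (A (evenIdx k) : ℕ)

/-- The partition function `Z(L,s)`: the sum of `q^(α_1+α_3+⋯+α_{2n-1})` over all strictly
increasing integer sequences `0 ≤ α_1 < ⋯ < α_{2n} ≤ L` with `∑_{k=1}^n (α_{2k}-α_{2k-1}) = s`
(`n` ranges over all nonnegative integers; a strictly increasing sequence in `{0,…,L}` has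
at most `L+1` terms, so `n < L+2` suffices; for `n = 0` the empty sequence contributes `1`
when `s = 0`). -/
noncomputable def Z (L s : ℕ) : RatFunc ℚ :=
  ∑ n ∈ Finset.range (L + 2),
    ∑ A ∈ Finset.univ.filter
        (fun A : Fin (2 * n) → Fin (L + 1) => StrictMono A ∧ balls A = s),
      q ^ energy A

/-! Split the states on `L + 1` wall positions according to whether the top wall sits at
position `L`. If it does not, the state lives on `L` positions, which gives `Z(L-1,s)`. If it
does and the last pair of walls is `(L - k, L)`, removing that pair leaves a state on the
positions `0, …, L - k - 1` with `s - k` balls, and lowers the energy by `L - k`. For a fixed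
number of pairs both correspondences are bijections between finite sets of sequences. -/

open Finset

section Sequences

variable {n : ℕ}

def ballsOf (a : Fin (2 * n) → ℕ) : ℕ :=
  ∑ k : Fin n, (a (oddIdx k) - a (evenIdx k))

def energyOf (a : Fin (2 * n) → ℕ) : ℕ :=
  ∑ k : Fin n, a (evenIdx k)

def dropPair {α : Type*} (a : Fin (2 * (n + 1)) → α) : Fin (2 * n) → α :=
  fun i => a (Fin.castLE (by omega) i)

def snocPair (b : Fin (2 * n) → ℕ) (x y : ℕ) : Fin (2 * (n + 1)) → ℕ :=
  fun i => if h : (i : ℕ) < 2 * n then b ⟨i, h⟩ else if (i : ℕ) = 2 * n then x else y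

lemma evenIdx_lt_oddIdx (k : Fin n) : evenIdx k < oddIdx k := by
  simp [Fin.lt_def, evenIdx, oddIdx]

lemma ballsOf_succ (a : Fin (2 * (n + 1)) → ℕ) :
    ballsOf a = ballsOf (dropPair a) + (a (oddIdx (Fin.last n)) - a (evenIdx (Fin.last n))) :=
  Fin.sum_univ_castSucc _

lemma energyOf_succ (a : Fin (2 * (n + 1)) → ℕ) :
    energyOf a = energyOf (dropPair a) + a (evenIdx (Fin.last n)) :=
  Fin.sum_univ_castSucc _

@[simp] lemma snocPair_evenIdx_last (b : Fin (2 * n) → ℕ) (x y : ℕ) :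
    snocPair b x y (evenIdx (Fin.last n)) = x := by
  simp [snocPair, evenIdx]

@[simp] lemma snocPair_oddIdx_last (b : Fin (2 * n) → ℕ) (x y : ℕ) :
    snocPair b x y (oddIdx (Fin.last n)) = y := by
  simp [snocPair, oddIdx]

@[simp] lemma dropPair_snocPair (b : Fin (2 * n) → ℕ) (x y : ℕ) :
    dropPair (snocPair b x y) = b := by
  funext i
  simp [dropPair, snocPair]

lemma snocPair_dropPair (a : Fin (2 * (n + 1)) → ℕ) :
    snocPair (dropPair a) (a (evenIdx (Fin.last n))) (a (oddIdx (Fin.last n))) = a := by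
  funext i
  simp only [snocPair, dropPair, evenIdx, oddIdx, Fin.val_last]
  split_ifs <;> congr 1 <;> ext <;> simp <;> omega

lemma strictMono_snocPair {b : Fin (2 * n) → ℕ} {x y : ℕ} (hb : StrictMono b)
    (hbx : ∀ i, b i < x) (hxy : x < y) : StrictMono (snocPair b x y) := by
  intro i j hij
  rw [Fin.lt_def] at hij
  simp only [snocPair]
  split_ifs
  all_goals first
    | exact hb (Fin.mk_lt_mk.2 hij)
    | exact hbx _
    | exact (hbx _).trans hxy
    | omega

lemma strictMono_dropPair {a : Fin (2 * (n + 1)) → ℕ} (ha : StrictMono a) :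
    StrictMono (dropPair a) :=
  ha.comp (Fin.strictMono_castLE _)

lemma dropPair_lt_of_strictMono {a : Fin (2 * (n + 1)) → ℕ} (ha : StrictMono a)
    (i : Fin (2 * n)) : dropPair a i < a (evenIdx (Fin.last n)) :=
  ha (by simp [Fin.lt_def, evenIdx])

end Sequences

def configs (N n s : ℕ) : Finset (Fin (2 * n) → ℕ) :=
  (Fintype.piFinset fun _ => range N).filter fun a => StrictMono a ∧ ballsOf a = s

noncomputable def Zpairs (N n s : ℕ) : RatFunc ℚ :=
  ∑ a ∈ configs N n s, q ^ energyOf a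

/-- `Zwalls N s = Z (N - 1) s` (`Z_eq_Zwalls`), parametrised by the number `N` of wall positions
so that the empty lattice `N = 0` is available; `Zpairs N n s` is the part of it coming from
states with exactly `n` pairs of walls. -/
noncomputable def Zwalls (N s : ℕ) : RatFunc ℚ :=
  ∑ n ∈ range (N + 1), Zpairs N n s

lemma mem_configs {N n s : ℕ} {a : Fin (2 * n) → ℕ} :
    a ∈ configs N n s ↔ (∀ i, a i < N) ∧ StrictMono a ∧ ballsOf a = s := by
  simp [configs, Fintype.mem_piFinset]

lemma Z_eq_Zwalls (L s : ℕ) : Z L s = Zwalls (L + 1) s := by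
  refine sum_congr rfl fun n _ => sum_bij (fun A _ => Fin.val ∘ A) ?_ ?_ ?_ ?_
  · intro A hA
    simp only [mem_filter, mem_univ, true_and] at hA
    exact mem_configs.2 ⟨fun i => (A i).isLt, hA⟩
  · intro A _ B _ h
    exact Fin.val_injective.comp_left h
  · intro a ha
    obtain ⟨ha, hmono, hballs⟩ := mem_configs.1 ha
    exact ⟨fun i => ⟨a i, ha i⟩, by simpa only [mem_filter, mem_univ, true_and] using ⟨hmono, hballs⟩,
      rfl⟩
  · intro A _
    rfl

lemma Zpairs_zero (N s : ℕ) : Zpairs N 0 s = if s = 0 then 1 else 0 := by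
  have h0 : ∀ i : Fin (2 * 0), False := fun i => i.elim0
  have hmem : ∀ a, a ∈ configs N 0 s ↔ s = 0 := fun a => by
    have hb : ballsOf a = 0 := by simp [ballsOf]
    rw [mem_configs, hb, eq_comm]
    exact ⟨fun h => h.2.2, fun hs => ⟨fun i => (h0 i).elim, fun i => (h0 i).elim, hs⟩⟩
  have : configs N 0 s = if s = 0 then {Fin.elim0} else ∅ := by
    ext a
    rw [hmem, show a = Fin.elim0 from funext fun i => (h0 i).elim]
    split_ifs <;> simp [*]
  rw [Zpairs, this]
  split_ifs <;> simp [energyOf]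

lemma Zpairs_eq_zero_of_lt {N n : ℕ} (s : ℕ) (h : N < 2 * n) : Zpairs N n s = 0 := by
  refine sum_eq_zero fun a ha => absurd ?_ h.not_ge
  obtain ⟨haN, hmono, -⟩ := mem_configs.1 ha
  simpa using card_le_card_of_injOn a (s := univ) (t := range N)
    (fun i _ => mem_range.2 (haN i)) hmono.injective.injOn

lemma Zpairs_succ_zero (N n : ℕ) : Zpairs N (n + 1) 0 = 0 := by
  refine sum_eq_zero fun a ha => absurd (mem_configs.1 ha).2.2 ?_
  have := (mem_configs.1 ha).2.1 (evenIdx_lt_oddIdx (Fin.last n))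
  rw [ballsOf_succ]
  omega

lemma sum_range_Zpairs {N R : ℕ} (s : ℕ) (h : N + 1 ≤ R) :
    ∑ n ∈ range R, Zpairs N n s = Zwalls N s :=
  (sum_subset (range_subset_range.2 h) fun n _ hn =>
    Zpairs_eq_zero_of_lt s (by simp at hn; omega)).symm

lemma Zwalls_zero_right (N : ℕ) : Zwalls N 0 = 1 := by
  rw [Zwalls, sum_range_succ', sum_eq_zero fun n _ => Zpairs_succ_zero N n, Zpairs_zero]
  simp

lemma filter_configs_lt_top (N n s : ℕ) :
    (configs (N + 1) (n + 1) s).filter (fun a => a (oddIdx (Fin.last n)) ≠ N) =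
      configs N (n + 1) s := by
  ext a
  simp only [mem_filter, mem_configs]
  constructor
  · rintro ⟨⟨haN, hmono, hballs⟩, htop⟩
    refine ⟨fun i => ?_, hmono, hballs⟩
    have : a i ≤ a (oddIdx (Fin.last n)) :=
      hmono.monotone (by rw [Fin.le_def]; simp [oddIdx]; omega)
    have := haN (oddIdx (Fin.last n))
    omega
  · rintro ⟨haN, hmono, hballs⟩
    exact ⟨⟨fun i => (haN i).trans (Nat.lt_succ_self N), hmono, hballs⟩, (haN _).ne⟩

lemma sum_configs_lastPair {N n s x y : ℕ} (hxy : x < y) (hyN : y < N) (hs : y - x ≤ s) :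
    ∑ a ∈ (configs N (n + 1) s).filter
        (fun a => a (evenIdx (Fin.last n)) = x ∧ a (oddIdx (Fin.last n)) = y),
      q ^ energyOf a = q ^ x * Zpairs x n (s - (y - x)) := by
  rw [Zpairs, mul_sum]
  refine sum_nbij' dropPair (fun b => snocPair b x y) ?_ ?_ ?_ ?_ ?_
  · intro a ha
    simp only [mem_filter, mem_configs] at ha ⊢
    obtain ⟨⟨-, hmono, hballs⟩, hx, hy⟩ := ha
    refine ⟨fun i => hx ▸ dropPair_lt_of_strictMono hmono i, strictMono_dropPair hmono, ?_⟩
    rw [ballsOf_succ, hx, hy] at hballs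
    omega
  · intro b hb
    simp only [mem_filter, mem_configs] at hb ⊢
    obtain ⟨hbx, hmono, hballs⟩ := hb
    refine ⟨⟨fun i => ?_, strictMono_snocPair hmono hbx hxy, ?_⟩, by simp, by simp⟩
    · simp only [snocPair]
      split_ifs
      · exact (hbx _).trans (hxy.trans hyN)
      · exact hxy.trans hyN
      · exact hyN
    · rw [ballsOf_succ, dropPair_snocPair, snocPair_evenIdx_last, snocPair_oddIdx_last]
      omega
  · intro a ha
    simp only [mem_filter] at ha
    rw [← ha.2.1, ← ha.2.2, snocPair_dropPair]
  · intro b _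
    exact dropPair_snocPair b x y
  · intro a ha
    simp only [mem_filter] at ha
    rw [energyOf_succ, ha.2.1, pow_add, mul_comm]

lemma Zpairs_succ_succ {N s : ℕ} (n : ℕ) (hs : s ≤ N) :
    Zpairs (N + 1) (n + 1) s =
      Zpairs N (n + 1) s + ∑ k ∈ Icc 1 s, q ^ (N - k) * Zpairs (N - k) n (s - k) := by
  rw [Zpairs, ← sum_filter_not_add_sum_filter _ (fun a => a (oddIdx (Fin.last n)) = N),
    filter_configs_lt_top, ← Zpairs]
  congr 1
  have hmaps : ∀ a ∈ (configs (N + 1) (n + 1) s).filter (fun a => a (oddIdx (Fin.last n)) = N),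
      N - a (evenIdx (Fin.last n)) ∈ Icc 1 s := by
    intro a ha
    simp only [mem_filter, mem_configs] at ha
    obtain ⟨⟨-, hmono, hballs⟩, htop⟩ := ha
    have := hmono (evenIdx_lt_oddIdx (Fin.last n))
    rw [ballsOf_succ] at hballs
    rw [mem_Icc]
    omega
  rw [← sum_fiberwise_of_maps_to hmaps]
  refine sum_congr rfl fun k hk => ?_
  rw [mem_Icc] at hk
  have hfiber := sum_configs_lastPair (N := N + 1) (n := n) (s := s) (x := N - k)
    (y := N) (by omega) (by omega) (by omega)
  rw [Nat.sub_sub_self (hk.2.trans hs)] at hfiber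
  rw [filter_filter, ← hfiber]
  congr 1
  refine filter_congr fun a ha => ?_
  have := (mem_configs.1 ha).2.1 (evenIdx_lt_oddIdx (Fin.last n))
  constructor
  · rintro ⟨htop, hgap⟩
    exact ⟨by omega, htop⟩
  · rintro ⟨hbot, htop⟩
    exact ⟨htop, by omega⟩

lemma Zwalls_succ {N s : ℕ} (hs : s ≤ N) :
    Zwalls (N + 1) s = Zwalls N s + ∑ k ∈ Icc 1 s, q ^ (N - k) * Zwalls (N - k) (s - k) := by
  have hzero : Zpairs (N + 1) 0 s = Zpairs N 0 s := by rw [Zpairs_zero, Zpairs_zero]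
  calc Zwalls (N + 1) s
      = Zpairs (N + 1) 0 s + ∑ n ∈ range (N + 1), Zpairs (N + 1) (n + 1) s := by
        rw [Zwalls, sum_range_succ', add_comm]
    _ = (Zpairs N 0 s + ∑ n ∈ range (N + 1), Zpairs N (n + 1) s) +
          ∑ k ∈ Icc 1 s, q ^ (N - k) * ∑ n ∈ range (N + 1), Zpairs (N - k) n (s - k) := by
        simp only [Zpairs_succ_succ _ hs, sum_add_distrib, mul_sum, hzero]
        rw [sum_comm (s := range (N + 1))]
        ring
    _ = Zwalls N s + ∑ k ∈ Icc 1 s, q ^ (N - k) * Zwalls (N - k) (s - k) := by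
        rw [add_comm (Zpairs N 0 s), ← sum_range_succ' (fun n => Zpairs N n s),
          sum_range_Zpairs s (by omega)]
        congr 1
        exact sum_congr rfl fun k _ => by rw [sum_range_Zpairs _ (by omega)]

theorem Z_recursion_general (L s : ℕ) (hL : 1 ≤ L) (hsL : s ≤ L) :
    Z L s = Z (L - 1) s + ∑ k ∈ Finset.Icc 1 s, q ^ (L - k) * Z (L - k - 1) (s - k) := by
  obtain ⟨N, rfl⟩ := Nat.exists_eq_add_of_le' hL
  have hZ : ∀ k ∈ Icc 1 s, Z (N + 1 - k - 1) (s - k) = Zwalls (N + 1 - k) (s - k) := by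
    intro k hk
    rw [mem_Icc] at hk
    rcases Nat.lt_or_ge k (N + 1) with hkN | hkN
    · rw [Z_eq_Zwalls, show N + 1 - k - 1 + 1 = N + 1 - k by omega]
    · -- `k = L = s`: `L - k - 1` truncates to `0`, harmless since only the empty state is left
      rw [show s - k = 0 by omega, Z_eq_Zwalls, Zwalls_zero_right, Zwalls_zero_right]
  rw [sum_congr rfl fun k hk => by rw [hZ k hk], Z_eq_Zwalls, Z_eq_Zwalls, Nat.add_sub_cancel,
    Zwalls_succ hsL]

/-- `Z(L,s)` satisfies the recursion
`Z(L,s) = Z(L-1,s) + ∑_{k=1}^s q^(L-k) · Z(L-k-1, s-k)` for `L ≥ 1` and `s ≥ 1`. -/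
theorem Z_recursion (L s : ℕ) (hL : 1 ≤ L) (hs : 1 ≤ s) (hsL : s ≤ L) :
    Z L s = Z (L - 1) s + ∑ k ∈ Finset.Icc 1 s, q ^ (L - k) * Z (L - k - 1) (s - k) :=
  Z_recursion_general L s hL hsL
end

section
/- Define Z⁺(L,s) as the sum of q^(α_1 + α_3 + ⋯ + α_{2n-1}) over all strictly increasing integer sequences 0 ≤ α_1 < α_2 < ⋯ < α_{2n} ≤ L with ∑_{k=1}^n (α_{2k}-α_{2k-1}) = s, satisfying the additional highest-weight conditions 2∑_{k=1}^{j-1} α_{2k} + α_{2j} ≤ 2∑_{k=1}^{j} α_{2k-1} for all 1 ≤ j ≤ n. Then for 0 ≤ s ≤ L/2, Z⁺(L,s) = [L choose s]_q − [L choose s-1]_q. -/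
/-!
Cut off the last box. Writing `F(L, s)` for the part of `Z⁺(L, s)` whose last box `L` is filled,
`Z⁺(L + 1, s) = Z⁺(L, s) + F(L + 1, s)`. A state counted by `F(L + 2, s + 1)` either has a last
run of at least two balls, and removing its last ball is a bijection onto the states counted by
`F(L + 1, s)`, or its last run is the single box `L + 2`, and removing that run is a bijection onto
the states counted by `Z⁺(L, s)` that multiplies the weight by `q ^ (L + 1)`. In both cases the
highest-weight condition of the last run is exactly `2 (s + 1) ≤ L + 2`. Eliminating `F` gives
`Z⁺(L + 2, s + 1) = Z⁺(L + 1, s + 1) + Z⁺(L + 1, s) - (1 - q ^ (L + 1)) Z⁺(L, s)`, a recurrence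
that the `q`-Pascal rules give for `[L choose s]_q` as well. The induction on `L` runs over
`2 s ≤ L + 1`; at the edge `2 s = L + 1` both sides vanish, the right one by the symmetry
`[L choose s]_q = [L choose L - s]_q`.
-/

attribute [local instance] Classical.propDecidable

/-- The highest-weight conditions
`2∑_{k=1}^{j-1} α_{2k} + α_{2j} ≤ 2∑_{k=1}^{j} α_{2k-1}` for all `1 ≤ j ≤ n`. -/
def highest {L n : ℕ} (A : Fin (2 * n) → Fin (L + 1)) : Prop :=
  ∀ j : Fin n,
    2 * (∑ k ∈ Finset.univ.filter (fun k : Fin n => k < j), (A (oddIdx k) : ℕ)) +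
        (A (oddIdx j) : ℕ)
      ≤ 2 * ∑ k ∈ Finset.univ.filter (fun k : Fin n => k ≤ j), (A (evenIdx k) : ℕ)

/-- The partition function `Z⁺(L,s)` over highest-weight states. -/
noncomputable def Zplus (L s : ℕ) : RatFunc ℚ :=
  ∑ n ∈ Finset.range (L + 2),
    ∑ A ∈ Finset.univ.filter
        (fun A : Fin (2 * n) → Fin (L + 1) => StrictMono A ∧ highest A ∧ balls A = s),
      q ^ energy A

open Finset

lemma one_sub_q_zpow_ne_zero {k : ℤ} (hk : 0 < k) : 1 - q ^ k ≠ 0 := by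
  lift k to ℕ using hk.le
  intro h
  have hX : (Polynomial.X ^ k : Polynomial ℚ) = 1 :=
    RatFunc.algebraMap_injective ℚ (by simpa [q] using (sub_eq_zero.1 h).symm)
  have hk0 : k = 0 := by simpa using congrArg Polynomial.natDegree hX
  omega

noncomputable def qfac (n : ℤ) : RatFunc ℚ := ∏ k ∈ Icc 1 n, (1 - q ^ k)

lemma qfac_ne_zero (n : ℤ) : qfac n ≠ 0 :=
  prod_ne_zero_iff.2 fun _ hk => one_sub_q_zpow_ne_zero (mem_Icc.1 hk).1

@[simp] lemma qfac_zero : qfac 0 = 1 := by simp [qfac]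

lemma qfac_add_one {n : ℤ} (hn : 0 ≤ n) : qfac (n + 1) = qfac n * (1 - q ^ (n + 1)) := by
  rw [qfac, ← insert_Icc_right_eq_Icc_add_one (by omega), prod_insert (by simp), mul_comm, qfac]

lemma qb_of_le {n m : ℤ} (h0 : 0 ≤ m) (hm : m ≤ n) :
    qb n m = qfac n / (qfac m * qfac (n - m)) :=
  if_pos ⟨h0, hm⟩

lemma qb_of_neg {n m : ℤ} (h : m < 0) : qb n m = 0 := if_neg fun h' => by omega

lemma qb_of_lt {n m : ℤ} (h : n < m) : qb n m = 0 := if_neg fun h' => by omega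

lemma qb_zero {n : ℤ} (hn : 0 ≤ n) : qb n 0 = 1 := by
  rw [qb_of_le le_rfl hn, qfac_zero, one_mul, sub_zero, div_self (qfac_ne_zero n)]

lemma qb_self {n : ℤ} (hn : 0 ≤ n) : qb n n = 1 := by
  rw [qb_of_le hn le_rfl, sub_self, qfac_zero, mul_one, div_self (qfac_ne_zero n)]

lemma qb_symm (n m : ℤ) : qb n (n - m) = qb n m := by
  unfold qb
  rw [sub_sub_cancel, mul_comm]
  congr 1
  exact propext ⟨fun h => ⟨by omega, by omega⟩, fun h => ⟨by omega, by omega⟩⟩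

lemma qb_add_one {n : ℤ} (hn : 0 ≤ n) (m : ℤ) :
    qb (n + 1) m = qb n (m - 1) + q ^ m * qb n m := by
  rcases lt_trichotomy m 0 with hm | rfl | hm
  · simp [qb_of_neg hm, qb_of_neg (show m - 1 < 0 by omega)]
  · simp [qb_zero hn, qb_zero (show 0 ≤ n + 1 by omega), qb_of_neg (show (-1 : ℤ) < 0 by omega)]
  rcases lt_trichotomy m (n + 1) with hmn | rfl | hmn
  · have hq : q ^ m * q ^ (n - m + 1) = q ^ (n + 1) := by
      rw [← zpow_add₀ RatFunc.X_ne_zero]; ring_nf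
    rw [qb_of_le hm.le hmn.le, qb_of_le (by omega) (by omega), qb_of_le hm.le (by omega)]
    have e1 := qfac_add_one hn
    have e2 := qfac_add_one (show 0 ≤ m - 1 by omega)
    have e3 := qfac_add_one (show 0 ≤ n - m by omega)
    rw [sub_add_cancel] at e2
    rw [show n + 1 - m = n - m + 1 by ring, e1, e2, e3, show n - (m - 1) = n - m + 1 by ring, e3]
    have := qfac_ne_zero n
    have := qfac_ne_zero (m - 1)
    have := qfac_ne_zero (n - m)
    have := one_sub_q_zpow_ne_zero hm
    have := one_sub_q_zpow_ne_zero (show 0 < n - m + 1 by omega)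
    field_simp
    linear_combination hq
  · rw [qb_self (by omega), add_sub_cancel_right, qb_self hn, qb_of_lt (by omega)]
    ring
  · rw [qb_of_lt hmn, qb_of_lt (by omega), qb_of_lt (by omega)]
    ring

lemma qb_add_one' {n : ℤ} (hn : 0 ≤ n) (m : ℤ) :
    qb (n + 1) m = qb n m + q ^ (n + 1 - m) * qb n (m - 1) := by
  rw [← qb_symm, qb_add_one hn, show n + 1 - m - 1 = n - m by ring, qb_symm,
    show n + 1 - m = n - (m - 1) by ring, qb_symm]

lemma qb_add_two (n : ℕ) (m : ℤ) :
    qb (n + 2) (m + 1) = qb (n + 1) (m + 1) + qb (n + 1) m - (1 - q ^ (n + 1)) * qb n m := by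
  have h1 := qb_add_one' (show (0 : ℤ) ≤ n + 1 by omega) (m + 1)
  have h2 := qb_add_one (Int.natCast_nonneg n) m
  have h3 := qb_add_one' (Int.natCast_nonneg n) m
  have hq : q ^ ((n : ℤ) + 1 - m) * q ^ m = q ^ (n + 1) := by
    rw [← zpow_add₀ RatFunc.X_ne_zero, sub_add_cancel, ← zpow_natCast]; push_cast; rfl
  rw [show (n : ℤ) + 1 + 1 = n + 2 by ring, show (n : ℤ) + 2 - (m + 1) = n + 1 - m by ring,
    add_sub_cancel_right] at h1
  linear_combination h1 + q ^ ((n : ℤ) + 1 - m) * h2 - h3 + qb n m * hq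

lemma sum_comp_eq_sum_of_injective {α β M : Type*} [AddCommMonoid M] {g : α → β}
    (hg : Function.Injective g) {S : Finset β} {T : Finset α} (hT : ∀ a, g a ∈ S ↔ a ∈ T)
    (hS : ∀ b ∈ S, b ∈ Set.range g) (f : β → M) :
    ∑ a ∈ T, f (g a) = ∑ b ∈ S, f b := by
  rw [← sum_image hg.injOn]
  congr 1
  ext b
  simp only [mem_image]
  constructor
  · rintro ⟨a, ha, rfl⟩
    exact (hT a).2 ha
  · intro hb
    obtain ⟨a, rfl⟩ := hS b hb
    exact ⟨a, (hT a).1 hb, rfl⟩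

lemma sum_succAbove_comp {m K : ℕ} {M : Type*} [AddCommMonoid M] (p : Fin (K + 1))
    {S : Finset (Fin m → Fin (K + 1))} {T : Finset (Fin m → Fin K)}
    (hT : ∀ A, p.succAbove ∘ A ∈ S ↔ A ∈ T) (f : (Fin m → Fin (K + 1)) → M) :
    ∑ A ∈ T, f (p.succAbove ∘ A) = ∑ A ∈ S.filter fun A => p ∉ Set.range A, f A := by
  refine sum_comp_eq_sum_of_injective Fin.succAbove_right_injective.comp_left
    (fun A => ?_) (fun A hA => ?_) f
  · simp [hT, Fin.succAbove_ne]
  · have hA : ∀ i, A i ≠ p := fun i h => (mem_filter.1 hA).2 ⟨i, h⟩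
    choose B hB using fun i => Fin.exists_succAbove_eq (hA i)
    exact ⟨B, funext hB⟩

section AppendRun

variable {α : Type*} {n : ℕ}

/-- The state `R` followed by a last run between the walls `a` and `b`. -/
def appendRun (R : Fin (2 * n) → α) (a b : α) : Fin (2 * (n + 1)) → α :=
  fun i => if h : (i : ℕ) < 2 * n then R ⟨i, h⟩ else if (i : ℕ) = 2 * n then a else b

variable (R : Fin (2 * n) → α) (a b : α)

@[simp] lemma appendRun_evenIdx_castSucc (k : Fin n) :
    appendRun R a b (evenIdx k.castSucc) = R (evenIdx k) := by
  simp [appendRun, evenIdx]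

@[simp] lemma appendRun_oddIdx_castSucc (k : Fin n) :
    appendRun R a b (oddIdx k.castSucc) = R (oddIdx k) := by
  have : 2 * (k : ℕ) + 1 < 2 * n := by omega
  simp [appendRun, oddIdx, this]

@[simp] lemma appendRun_evenIdx_last : appendRun R a b (evenIdx (Fin.last n)) = a := by
  simp [appendRun, evenIdx]

@[simp] lemma appendRun_oddIdx_last : appendRun R a b (oddIdx (Fin.last n)) = b := by
  simp [appendRun, oddIdx]

lemma exists_eq_appendRun (A : Fin (2 * (n + 1)) → α) : ∃ R a b, A = appendRun R a b := by
  refine ⟨fun i => A ⟨i, by omega⟩, A (evenIdx (Fin.last n)), A (oddIdx (Fin.last n)), ?_⟩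
  ext i
  simp only [appendRun]
  split_ifs with h1 h2 <;> congr 1 <;> ext <;> simp [evenIdx, oddIdx] <;> omega

lemma comp_appendRun {β : Type*} (f : α → β) :
    f ∘ appendRun R a b = appendRun (f ∘ R) (f a) (f b) := by
  ext i
  simp only [Function.comp, appendRun]
  split_ifs <;> rfl

lemma appendRun_left_injective : Function.Injective fun R : Fin (2 * n) → α => appendRun R a b := by
  intro R R' h
  ext i
  have := congrFun h ⟨i, by omega⟩
  simpa [appendRun] using this

lemma mem_range_appendRun {x : α} :
    x ∈ Set.range (appendRun R a b) ↔ x ∈ Set.range R ∨ x = a ∨ x = b := by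
  constructor
  · rintro ⟨i, rfl⟩
    simp only [appendRun]
    split_ifs
    · exact Or.inl ⟨_, rfl⟩
    · exact Or.inr (Or.inl rfl)
    · exact Or.inr (Or.inr rfl)
  · rintro (⟨i, rfl⟩ | rfl | rfl)
    · exact ⟨⟨i, by omega⟩, by simp [appendRun]⟩
    · exact ⟨_, appendRun_evenIdx_last R _ _⟩
    · exact ⟨_, appendRun_oddIdx_last R _ _⟩

lemma strictMono_appendRun [Preorder α] :
    StrictMono (appendRun R a b) ↔ StrictMono R ∧ (∀ i, R i < a) ∧ a < b := by
  constructor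
  · intro h
    refine ⟨fun i j hij => ?_, fun i => ?_, ?_⟩
    · simpa [appendRun] using @h ⟨i, by omega⟩ ⟨j, by omega⟩ hij
    · have := @h ⟨i, by omega⟩ (evenIdx (Fin.last n)) (by simp [Fin.lt_def, evenIdx])
      rw [appendRun_evenIdx_last] at this
      simpa [appendRun] using this
    · have hlt : evenIdx (Fin.last n) < oddIdx (Fin.last n) := by
        simp [Fin.lt_def, evenIdx, oddIdx]
      simpa using h hlt
  · rintro ⟨hR, hRa, hab⟩ i j hij
    rw [Fin.lt_def] at hij
    simp only [appendRun]
    split_ifs <;> first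
      | exact hR (Fin.mk_lt_mk.2 hij)
      | exact hRa _
      | exact (hRa _).trans hab
      | exact hab
      | omega

end AppendRun

section ValCongr

variable {L L' n : ℕ}

lemma strictMono_congr_val {ι : Type*} [Preorder ι] {A : ι → Fin (L + 1)} {B : ι → Fin (L' + 1)}
    (h : ∀ i, (A i : ℕ) = B i) : StrictMono A ↔ StrictMono B := by
  simp only [StrictMono, Fin.lt_def, h]

variable {A : Fin (2 * n) → Fin (L + 1)} {B : Fin (2 * n) → Fin (L' + 1)}

lemma balls_congr_val (h : ∀ i, (A i : ℕ) = B i) : balls A = balls B := by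
  simp only [balls, h]

lemma energy_congr_val (h : ∀ i, (A i : ℕ) = B i) : energy A = energy B := by
  simp only [energy, h]

lemma highest_congr_val (h : ∀ i, (A i : ℕ) = B i) : highest A ↔ highest B := by
  simp only [highest, h]

end ValCongr

section RunStatistics

variable {L n : ℕ}

lemma evenIdx_le_oddIdx (k : Fin n) : evenIdx k ≤ oddIdx k := by
  simp [Fin.le_def, evenIdx, oddIdx]

lemma balls_add_energy {R : Fin (2 * n) → Fin (L + 1)} (hR : Monotone R) :
    balls R + energy R = ∑ k, (R (oddIdx k) : ℕ) := by
  rw [balls, energy, ← sum_add_distrib]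
  exact sum_congr rfl fun k _ => Nat.sub_add_cancel (hR (evenIdx_le_oddIdx k))

lemma balls_appendRun (R : Fin (2 * n) → Fin (L + 1)) (a b : Fin (L + 1)) :
    balls (appendRun R a b) = balls R + (b - a) := by
  simp [balls, Fin.sum_univ_castSucc]

lemma energy_appendRun (R : Fin (2 * n) → Fin (L + 1)) (a b : Fin (L + 1)) :
    energy (appendRun R a b) = energy R + a := by
  simp [energy, Fin.sum_univ_castSucc]

lemma highest_appendRun {R : Fin (2 * n) → Fin (L + 1)} {a b : Fin (L + 1)} (hR : Monotone R)
    (hab : a ≤ b) : highest (appendRun R a b) ↔ highest R ∧ 2 * (balls R + (b - a)) ≤ b := by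
  have hIic : Iic (Fin.last n) = univ := by ext; simp [Fin.le_last]
  have hsum := balls_add_energy hR
  unfold highest
  rw [Fin.forall_fin_succ']
  simp only [filter_gt_eq_Iio, filter_ge_eq_Iic, Fin.sum_Iio_castSucc, Fin.sum_Iic_castSucc,
    appendRun_evenIdx_castSucc, appendRun_oddIdx_castSucc, Fin.Iio_last_eq_map, sum_map,
    Fin.coe_castSuccEmb, hIic, Fin.sum_univ_castSucc, appendRun_oddIdx_last,
    appendRun_evenIdx_last]
  -- the last condition involves `∑ k, R (oddIdx k) - ∑ k, R (evenIdx k) = balls R`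
  rw [energy] at hsum
  have : (a : ℕ) ≤ b := hab
  exact and_congr_right' (by omega)

end RunStatistics

section States

noncomputable def hwStates (L n s : ℕ) : Finset (Fin (2 * n) → Fin (L + 1)) :=
  univ.filter fun A => StrictMono A ∧ highest A ∧ balls A = s

/-- The states whose last box `L` is filled. -/
noncomputable def topStates (L n s : ℕ) : Finset (Fin (2 * n) → Fin (L + 1)) :=
  (hwStates L n s).filter fun A => Fin.last L ∈ Set.range A

noncomputable def hwSum (L n s : ℕ) : RatFunc ℚ := ∑ A ∈ hwStates L n s, q ^ energy A

noncomputable def topSum (L n s : ℕ) : RatFunc ℚ := ∑ A ∈ topStates L n s, q ^ energy A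

variable {L L' n s : ℕ}

lemma mem_hwStates_congr_val {A : Fin (2 * n) → Fin (L + 1)} {B : Fin (2 * n) → Fin (L' + 1)}
    (h : ∀ i, (A i : ℕ) = B i) : A ∈ hwStates L n s ↔ B ∈ hwStates L' n s := by
  simp only [hwStates, mem_filter, mem_univ, true_and, strictMono_congr_val h,
    highest_congr_val h, balls_congr_val h]

lemma appendRun_mem_hwStates {R : Fin (2 * n) → Fin (L + 1)} {a b : Fin (L + 1)} :
    appendRun R a b ∈ hwStates L (n + 1) s ↔
      (StrictMono R ∧ (∀ i, R i < a) ∧ a < b) ∧ highest R ∧ 2 * s ≤ b ∧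
        balls R + (b - a) = s := by
  simp only [hwStates, mem_filter, mem_univ, true_and, strictMono_appendRun, balls_appendRun]
  constructor
  · rintro ⟨hR, hh, rfl⟩
    exact ⟨hR, ((highest_appendRun hR.1.monotone hR.2.2.le).1 hh).1,
      ((highest_appendRun hR.1.monotone hR.2.2.le).1 hh).2, rfl⟩
  · rintro ⟨hR, hh, hs, rfl⟩
    exact ⟨hR, (highest_appendRun hR.1.monotone hR.2.2.le).2 ⟨hh, hs⟩, rfl⟩

lemma appendRun_mem_topStates {R : Fin (2 * n) → Fin (L + 1)} {a b : Fin (L + 1)} :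
    appendRun R a b ∈ topStates L (n + 1) s ↔
      (StrictMono R ∧ (∀ i, R i < a) ∧ a < Fin.last L) ∧ highest R ∧ 2 * s ≤ L ∧
        balls R + (L - a) = s ∧ b = Fin.last L := by
  rw [topStates, mem_filter, appendRun_mem_hwStates, mem_range_appendRun]
  constructor
  · rintro ⟨⟨⟨hR, hRa, hab⟩, hh, hs, hb⟩, hlast⟩
    have hb : b = Fin.last L := by
      rcases hlast with ⟨i, hi⟩ | hi | hi
      · exact absurd (hi ▸ (hRa i).trans hab) (not_lt.2 (Fin.le_last b))
      · exact absurd (hi ▸ hab) (not_lt.2 (Fin.le_last b))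
      · exact hi.symm
    subst hb
    exact ⟨⟨hR, hRa, hab⟩, hh, hs, hb, rfl⟩
  · rintro ⟨⟨hR, hRa, hab⟩, hh, hs, hb, rfl⟩
    exact ⟨⟨⟨hR, hRa, hab⟩, hh, hs, hb⟩, Or.inr (Or.inr rfl)⟩

end States

section Recursion

variable {L n s : ℕ}

lemma hwSum_succ (L n s : ℕ) : hwSum (L + 1) n s = hwSum L n s + topSum (L + 1) n s := by
  rw [hwSum, ← sum_filter_not_add_sum_filter _ fun A => Fin.last (L + 1) ∈ Set.range A]
  congr 1
  rw [hwSum, ← sum_succAbove_comp (Fin.last (L + 1)) (T := hwStates L n s)]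
  · simp only [Fin.succAbove_last]
    exact sum_congr rfl fun A _ => congrArg (q ^ ·) (energy_congr_val fun i => rfl)
  · intro A
    rw [Fin.succAbove_last]
    exact mem_hwStates_congr_val fun i => rfl

lemma val_succAbove_of_lt {x : Fin (L + 2)} (hx : x < Fin.last (L + 1)) :
    ((Fin.last (L + 1)).castSucc.succAbove x : ℕ) = x := by
  rw [Fin.succAbove_of_castSucc_lt _ _ (Fin.castSucc_lt_castSucc_iff.2 hx), Fin.val_castSucc]

/- `succAbove` of the wall value `L + 1` fixes the smaller walls and moves a top wall `L + 1` to
`L + 2`: it adds one ball at the end of the last run. -/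
lemma succAbove_comp_mem_topStates (h : 2 * (s + 1) ≤ L + 2) (A : Fin (2 * (n + 1)) → Fin (L + 2)) :
    (Fin.last (L + 1)).castSucc.succAbove ∘ A ∈ topStates (L + 2) (n + 1) (s + 1) ↔
      A ∈ topStates (L + 1) (n + 1) s := by
  set p := (Fin.last (L + 1)).castSucc
  have hp : p ≠ Fin.last (L + 2) := Fin.castSucc_ne_last _
  obtain ⟨R, a, b, rfl⟩ := exists_eq_appendRun A
  rw [comp_appendRun, appendRun_mem_topStates, appendRun_mem_topStates,
    Fin.succAbove_eq_last_iff hp]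
  constructor
  · rintro ⟨⟨hR, hRa, ha⟩, hh, -, hbal, rfl⟩
    have hRa' : ∀ i, R i < a := fun i => Fin.succAbove_lt_succAbove_iff.1 (hRa i)
    have ha' : a < Fin.last (L + 1) := by
      refine lt_of_le_of_ne (Fin.le_last a) fun hal => ?_
      exact ha.ne ((Fin.succAbove_eq_last_iff hp).2 hal)
    have hRv : ∀ i, ((p.succAbove ∘ R) i : ℕ) = R i := fun i => val_succAbove_of_lt ((hRa' i).trans ha')
    rw [balls_congr_val hRv, val_succAbove_of_lt ha'] at hbal
    have : (a : ℕ) < L + 1 := ha'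
    exact ⟨⟨(strictMono_congr_val hRv).1 hR, hRa', ha'⟩, (highest_congr_val hRv).1 hh, by omega,
      by omega, rfl⟩
  · rintro ⟨⟨hR, hRa, ha⟩, hh, -, hbal, rfl⟩
    have hRv : ∀ i, ((p.succAbove ∘ R) i : ℕ) = R i := fun i => val_succAbove_of_lt ((hRa i).trans ha)
    have hav := val_succAbove_of_lt ha
    have : (a : ℕ) < L + 1 := ha
    refine ⟨⟨(strictMono_congr_val hRv).2 hR, fun i => Fin.succAbove_lt_succAbove_iff.2 (hRa i),
      Fin.lt_def.2 (by rw [hav, Fin.val_last]; omega)⟩, (highest_congr_val hRv).2 hh, h, ?_, rfl⟩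
    rw [balls_congr_val hRv, hav]
    omega

lemma energy_succAbove_comp {A : Fin (2 * (n + 1)) → Fin (L + 2)}
    (hA : A ∈ topStates (L + 1) (n + 1) s) :
    energy ((Fin.last (L + 1)).castSucc.succAbove ∘ A) = energy A := by
  set p := (Fin.last (L + 1)).castSucc
  obtain ⟨R, a, b, rfl⟩ := exists_eq_appendRun A
  obtain ⟨⟨-, hRa, ha⟩, -⟩ := appendRun_mem_topStates.1 hA
  rw [comp_appendRun, energy_appendRun, energy_appendRun, val_succAbove_of_lt ha,
    energy_congr_val (A := p.succAbove ∘ R) fun i => val_succAbove_of_lt ((hRa i).trans ha)]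

lemma sum_topStates_filter_not_mem_range (h : 2 * (s + 1) ≤ L + 2) :
    ∑ A ∈ (topStates (L + 2) (n + 1) (s + 1)).filter
        (fun A => (Fin.last (L + 1)).castSucc ∉ Set.range A), q ^ energy A =
      topSum (L + 1) (n + 1) s := by
  rw [← sum_succAbove_comp _ (succAbove_comp_mem_topStates h), topSum]
  exact sum_congr rfl fun A hA => by rw [energy_succAbove_comp hA]

/-- Appends the single box `L + 2` as a last run. -/
def appendLastBox {L n : ℕ} (A : Fin (2 * n) → Fin (L + 1)) : Fin (2 * (n + 1)) → Fin (L + 3) :=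
  appendRun (Fin.castLE (by omega) ∘ A) (Fin.last (L + 1)).castSucc (Fin.last (L + 2))

lemma appendLastBox_injective :
    Function.Injective (appendLastBox : (Fin (2 * n) → Fin (L + 1)) → _) :=
  (appendRun_left_injective _ _).comp (Fin.castLE_injective _).comp_left

lemma energy_appendLastBox (A : Fin (2 * n) → Fin (L + 1)) :
    energy (appendLastBox A) = energy A + (L + 1) := by
  rw [appendLastBox, energy_appendRun, energy_congr_val fun i => rfl]
  rfl

lemma appendLastBox_mem_topStates_iff (h : 2 * (s + 1) ≤ L + 2) (A : Fin (2 * n) → Fin (L + 1)) :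
    appendLastBox A ∈ (topStates (L + 2) (n + 1) (s + 1)).filter
        (fun A => (Fin.last (L + 1)).castSucc ∈ Set.range A) ↔ A ∈ hwStates L n s := by
  have hA : ∀ i, (((Fin.castLE (by omega) : Fin (L + 1) → Fin (L + 3)) ∘ A) i : ℕ) = A i :=
    fun _ => rfl
  simp only [appendLastBox, mem_filter, appendRun_mem_topStates, mem_range_appendRun, hwStates,
    mem_univ, true_and, strictMono_congr_val hA, highest_congr_val hA, balls_congr_val hA,
    and_true, true_or, or_true, Fin.val_castSucc, Fin.val_last]
  constructor
  · rintro ⟨⟨hR, -, -⟩, hh, -, hb⟩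
    exact ⟨hR, hh, by omega⟩
  · rintro ⟨hR, hh, hb⟩
    refine ⟨⟨hR, fun i => Fin.lt_def.2 ?_, Fin.lt_def.2 ?_⟩, hh, h, by omega⟩
    · rw [hA, Fin.val_castSucc, Fin.val_last]
      exact (A i).isLt
    · simp

lemma mem_range_appendLastBox {B : Fin (2 * (n + 1)) → Fin (L + 3)}
    (hB : B ∈ (topStates (L + 2) (n + 1) (s + 1)).filter
      (fun A => (Fin.last (L + 1)).castSucc ∈ Set.range A)) :
    B ∈ Set.range appendLastBox := by
  obtain ⟨R, a, b, rfl⟩ := exists_eq_appendRun B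
  obtain ⟨⟨⟨-, hRa, ha⟩, -, -, -, rfl⟩, hpa⟩ :=
    (mem_filter.1 hB).imp appendRun_mem_topStates.1 (mem_range_appendRun _ _ _).1
  simp only [Fin.lt_def, Fin.val_last] at hRa ha
  have hap : a = (Fin.last (L + 1)).castSucc := by
    rcases hpa with ⟨i, hi⟩ | hi | hi
    · have := hRa i
      rw [hi, Fin.val_castSucc, Fin.val_last] at this
      omega
    · exact hi.symm
    · exact absurd (congrArg Fin.val hi) (by simp)
  subst hap
  exact ⟨fun i => ⟨R i, hRa i⟩, rfl⟩

lemma sum_topStates_filter_mem_range (h : 2 * (s + 1) ≤ L + 2) :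
    ∑ A ∈ (topStates (L + 2) (n + 1) (s + 1)).filter
        (fun A => (Fin.last (L + 1)).castSucc ∈ Set.range A), q ^ energy A =
      q ^ (L + 1) * hwSum L n s := by
  rw [hwSum, mul_sum, ← sum_comp_eq_sum_of_injective appendLastBox_injective
    (appendLastBox_mem_topStates_iff h) fun B hB => mem_range_appendLastBox hB]
  exact sum_congr rfl fun A _ => by rw [energy_appendLastBox, pow_add, mul_comm]

lemma topSum_succ_succ (h : 2 * (s + 1) ≤ L + 2) :
    topSum (L + 2) (n + 1) (s + 1) = topSum (L + 1) (n + 1) s + q ^ (L + 1) * hwSum L n s := by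
  rw [topSum, ← sum_filter_not_add_sum_filter _ fun A => (Fin.last (L + 1)).castSucc ∈ Set.range A,
    sum_topStates_filter_not_mem_range h, sum_topStates_filter_mem_range h]

end Recursion

section Zplus

variable {L n s : ℕ}

lemma topSum_zero (L s : ℕ) : topSum L 0 s = 0 :=
  sum_eq_zero fun _ hA => by
    obtain ⟨⟨i, hi⟩, -⟩ := (mem_filter.1 hA).2
    omega

lemma two_mul_le_of_mem_hwStates {A : Fin (2 * n) → Fin (L + 1)} (hA : A ∈ hwStates L n s) :
    2 * s ≤ L := by
  rcases n with _ | n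
  · simp [hwStates, balls] at hA
    omega
  · obtain ⟨R, a, b, rfl⟩ := exists_eq_appendRun A
    have := (appendRun_mem_hwStates.1 hA).2.2.1
    have := b.isLt
    omega

lemma pos_of_mem_hwStates {A : Fin (2 * (n + 1)) → Fin (L + 1)} (hA : A ∈ hwStates L (n + 1) s) :
    0 < s := by
  obtain ⟨R, a, b, rfl⟩ := exists_eq_appendRun A
  obtain ⟨⟨-, -, hab⟩, -, -, rfl⟩ := appendRun_mem_hwStates.1 hA
  rw [Fin.lt_def] at hab
  omega

lemma hwStates_eq_empty (h : L + 1 < 2 * n) : hwStates L n s = ∅ :=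
  filter_eq_empty_iff.2 fun A _ hA => by
    have := Fintype.card_le_of_injective A hA.1.injective
    simp only [Fintype.card_fin] at this
    omega

lemma hwSum_zero_zero (L : ℕ) : hwSum L 0 0 = 1 := by
  simp [hwSum, hwStates, highest, balls, energy, StrictMono]

lemma Zplus_eq_sum_range {N : ℕ} (hN : L + 2 ≤ N) : Zplus L s = ∑ n ∈ range N, hwSum L n s :=
  sum_subset (f := fun n => hwSum L n s) (range_subset_range.2 hN) fun n _ hn => by
    rw [hwSum, hwStates_eq_empty (by simp at hn; omega), sum_empty]

lemma Zplus_zero (L : ℕ) : Zplus L 0 = 1 := by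
  rw [Zplus_eq_sum_range le_rfl, sum_range_succ', hwSum_zero_zero, add_eq_right]
  exact sum_eq_zero fun n _ => sum_eq_zero fun A hA => absurd (pos_of_mem_hwStates hA) (lt_irrefl 0)

lemma Zplus_eq_zero (h : L < 2 * s) : Zplus L s = 0 :=
  sum_eq_zero fun _ _ => sum_eq_zero fun _ hA => absurd (two_mul_le_of_mem_hwStates hA) (by omega)

lemma Zplus_add_two (h : 2 * (s + 1) ≤ L + 2) :
    Zplus (L + 2) (s + 1) =
      Zplus (L + 1) (s + 1) + Zplus (L + 1) s - (1 - q ^ (L + 1)) * Zplus L s := by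
  have hsucc : ∀ n, hwSum (L + 2) (n + 1) (s + 1) = hwSum (L + 1) (n + 1) (s + 1) +
      (hwSum (L + 1) (n + 1) s - hwSum L (n + 1) s) + q ^ (L + 1) * hwSum L n s := fun n => by
    rw [hwSum_succ (L + 1) (n + 1) (s + 1), topSum_succ_succ h, hwSum_succ L (n + 1) s]
    ring
  have hzero : hwSum (L + 2) 0 (s + 1) =
      hwSum (L + 1) 0 (s + 1) + (hwSum (L + 1) 0 s - hwSum L 0 s) := by
    rw [hwSum_succ (L + 1) 0 (s + 1), hwSum_succ L 0 s, topSum_zero, topSum_zero]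
    ring
  have hsplit : ∀ {M t : ℕ}, M ≤ L + 2 →
      Zplus M t = ∑ n ∈ range (L + 3), hwSum M (n + 1) t + hwSum M 0 t := fun hM => by
    rw [Zplus_eq_sum_range (N := L + 4) (by omega), sum_range_succ']
  have hL := Zplus_eq_sum_range (L := L) (s := s) (N := L + 3) (by omega)
  have hL' := hsplit (M := L) (t := s) (by omega)
  rw [hsplit (M := L + 2) (t := s + 1) le_rfl, hsplit (M := L + 1) (t := s + 1) (by omega),
    hsplit (M := L + 1) (t := s) (by omega), sum_congr rfl fun n _ => hsucc n, hzero]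
  simp only [sum_add_distrib, sum_sub_distrib, ← mul_sum]
  linear_combination hL' - q ^ (L + 1) * hL

end Zplus

theorem Zplus_eq_of_two_mul_le_add_one {L s : ℕ} (h : 2 * s ≤ L + 1) :
    Zplus L s = qb L s - qb L ((s : ℤ) - 1) := by
  induction L using Nat.strong_induction_on generalizing s with
  | _ L ih =>
  rcases s with _ | s
  · rw [Zplus_zero, Nat.cast_zero, qb_zero (Int.natCast_nonneg L), qb_of_neg (by omega), sub_zero]
  rcases (show 2 * (s + 1) = L + 1 ∨ 2 * (s + 1) ≤ L by omega) with h' | h'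
  · have hsymm : qb L ((s : ℤ) + 1) = qb L s := by
      rw [← qb_symm, show (L : ℤ) - (s + 1) = s by omega]
    push_cast
    rw [Zplus_eq_zero (by omega), add_sub_cancel_right, hsymm, sub_self]
  obtain ⟨M, rfl⟩ : ∃ M, L = M + 2 := ⟨L - 2, by omega⟩
  rw [Zplus_add_two (by omega), ih (M + 1) (by omega) (by omega), ih (M + 1) (by omega) (by omega),
    ih M (by omega) (by omega)]
  have h1 := qb_add_two M s
  have h2 := qb_add_two M ((s : ℤ) - 1)
  rw [sub_add_cancel] at h2
  push_cast
  simp only [add_sub_cancel_right]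
  linear_combination h2 - h1

/-- For `0 ≤ s ≤ L/2`, `Z⁺(L,s) = [L choose s]_q − [L choose s-1]_q`
(with the convention `[L choose -1]_q = 0`). -/
theorem Zplus_eq (L s : ℕ) (h : 2 * s ≤ L) :
    Zplus L s = qb L s - qb L ((s : ℤ) - 1) :=
  Zplus_eq_of_two_mul_le_add_one (by omega)
end

section
/- Let λ = (1^{m_1} ⋯ h^{m_h}) be a partition with m_h > 0 and riggings J^i = (J^i_1 ≤ ⋯ ≤ J^i_{m_i}) for each i. Define M_a recursively by M_{h+1} = (empty 2×0 matrix) and M_a = Φ_1(Ω_{J^a}(M_{a+1})), where Ω_{J^a} inserts each rigging J^a_j twice (as in the insertion map) and Φ_1 adds the matrix with rows (1,3,…,2n−1) and (2,4,…,2n) to a 2×n matrix. Then for 1 ≤ a ≤ h, the lower-right (last bottom-row) entry of M_a equals max over i ≥ a with m_i > 0 of (J^i_{m_i} + 2·∑_{k=a}^h (min(k,i)−a+1)·m_k). -/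
/-!
A matrix in `H_n` (a 2×n integer matrix whose entries read column by column, top then
bottom, are weakly increasing) is recorded by its reading sequence
`α_1 ≤ α_2 ≤ ⋯ ≤ α_{2n}`, as a sorted list of integers.
-/

/-- `Φ_1` adds `(1,3,…,2n−1)` to the top row and `(2,4,…,2n)` to the bottom row,
i.e. it adds `k` to the `k`-th entry (1-based) of the reading sequence. -/
def Phi1 (l : List ℤ) : List ℤ := l.mapIdx (fun i a => a + (i : ℤ) + 1)

/-- `Ω_X` inserts two copies of each element of the finite multiset `X` (recorded as a
list) into the sorted reading sequence. -/
def OmegaL (X : List ℤ) (l : List ℤ) : List ℤ :=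
  X.foldr (fun x m => List.orderedInsert (· ≤ ·) x (List.orderedInsert (· ≤ ·) x m)) l

/-- The recursive construction: `Mrec J h k` is the matrix `M_{h+1-k}`, where
`M_{h+1}` is the empty matrix and `M_a = Φ_1(Ω_{J^a}(M_{a+1}))`. -/
def Mrec (J : ℕ → List ℤ) (h : ℕ) : ℕ → List ℤ
  | 0 => []
  | k + 1 => Phi1 (OmegaL (J (h - k)) (Mrec J h k))

/-!
Every matrix produced by the recursion has a weakly increasing reading sequence, so its
lower-right entry is its largest entry, and the largest entry does not see the order of the
entries: `Ω_X` merely adds `max X`, and `Φ_1` then adds the length `2(m_a + ⋯ + m_h)` of the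
sequence to its last entry. Hence the lower-right entry of `M_a` is
`max(J^a_{m_a}, lower-right entry of M_{a+1}) + 2(m_a + ⋯ + m_h)`. Unrolling this recursion,
the branch through `J^i` counts part `k` once at each level `a ≤ b ≤ min(k, i)`, which gives
the weight `min(k, i) − a + 1`.
-/

theorem List.Pairwise.maximum_eq_getLast? {α : Type*} [LinearOrder α] {l : List α}
    (hl : l.Pairwise (· ≤ ·)) : l.maximum = l.getLast? := by
  obtain rfl | ⟨l, x, rfl⟩ := l.eq_nil_or_concat
  · rfl
  · rw [List.concat_eq_append] at hl ⊢
    have hx : ∀ y ∈ l, y ≤ x := by simpa using (List.pairwise_append.1 hl).2.2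
    rw [List.maximum_concat, List.getLast?_concat,
      max_eq_right (List.maximum_le_of_forall_le fun y hy => WithBot.coe_le_coe.2 (hx y hy))]
    rfl

lemma List.Pairwise.maximum_eq_ite {α : Type*} [LinearOrder α] {l : List α}
    (hl : l.Pairwise (· ≤ ·)) (d : α) :
    l.maximum = if l ≠ [] then ↑(l.getLast?.getD d) else ⊥ := by
  rw [hl.maximum_eq_getLast?]
  split_ifs with hne
  · rw [List.getLast?_eq_some_getLast hne]
    rfl
  · rw [not_not.1 hne]
    rfl

lemma Finset.sup_add_coe {ι α : Type*} [LinearOrder α] [Add α] [AddRightMono α]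
    (s : Finset ι) (f : ι → WithBot α) (c : α) :
    s.sup f + ↑c = s.sup fun i => f i + ↑c :=
  Finset.apply_sup_eq_sup_comp_of_linearOrder (· + (c : WithBot α))
    (fun _ _ hxy => add_le_add_left hxy _) rfl

lemma sum_Icc_eq_add_sum_Icc_succ {M : Type*} [AddCommMonoid M] (f : ℕ → M) {a b : ℕ}
    (hab : a ≤ b) :
    ∑ k ∈ Finset.Icc a b, f k = f a + ∑ k ∈ Finset.Icc (a + 1) b, f k := by
  rw [← Finset.add_sum_Ioc_eq_sum_Icc hab, Finset.Icc_add_one_left_eq_Ioc]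

lemma Phi1_length (l : List ℤ) : (Phi1 l).length = l.length := List.length_mapIdx

lemma Phi1_pairwise {l : List ℤ} (hl : l.Pairwise (· ≤ ·)) :
    (Phi1 l).Pairwise (· ≤ ·) := by
  rw [List.pairwise_iff_getElem] at hl ⊢
  intro i j hi hj hij
  simp only [Phi1, List.getElem_mapIdx]
  have : (i : ℤ) ≤ j := by exact_mod_cast hij.le
  linarith [hl i j (by simpa [Phi1] using hi) (by simpa [Phi1] using hj) hij]

lemma maximum_Phi1 {l : List ℤ} (hl : l.Pairwise (· ≤ ·)) :
    (Phi1 l).maximum = l.maximum + ↑(l.length : ℤ) := by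
  rw [(Phi1_pairwise hl).maximum_eq_getLast?, hl.maximum_eq_getLast?]
  obtain rfl | ⟨l, x, rfl⟩ := l.eq_nil_or_concat
  · rfl
  · simp only [Phi1, List.concat_eq_append, List.mapIdx_concat, List.getLast?_concat,
      List.length_append, List.length_singleton]
    change ((x + l.length + 1 : ℤ) : WithBot ℤ) =
      ((x + ((l.length + 1 : ℕ) : ℤ) : ℤ) : WithBot ℤ)
    exact congrArg _ (by push_cast; ring)

lemma OmegaL_perm (X l : List ℤ) : (OmegaL X l).Perm (X ++ X ++ l) := by
  induction X with
  | nil => rfl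
  | cons x X ih =>
    refine ((List.perm_orderedInsert _ _ _).trans
      ((List.perm_orderedInsert _ _ _).cons x)).trans ?_
    refine ((ih.cons x).cons x).trans ?_
    simp only [List.cons_append, List.perm_cons, List.append_assoc]
    exact List.perm_middle.symm

lemma OmegaL_pairwise (X : List ℤ) {l : List ℤ} (hl : l.Pairwise (· ≤ ·)) :
    (OmegaL X l).Pairwise (· ≤ ·) := by
  induction X with
  | nil => exact hl
  | cons x X ih => exact (ih.orderedInsert x _).orderedInsert x _

lemma OmegaL_length (X l : List ℤ) : (OmegaL X l).length = 2 * X.length + l.length := by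
  rw [(OmegaL_perm X l).length_eq]
  simp only [List.length_append]
  ring

lemma maximum_OmegaL (X l : List ℤ) : (OmegaL X l).maximum = max X.maximum l.maximum := by
  rw [(OmegaL_perm X l).maximum_eq, List.maximum_append, List.maximum_append, max_self]

lemma sum_min_sub_add_one_mul_self (n : ℕ → ℤ) (a h : ℕ) :
    ∑ k ∈ Finset.Icc a h, ((min k a : ℤ) - a + 1) * n k = ∑ k ∈ Finset.Icc a h, n k := by
  refine Finset.sum_congr rfl fun k hk => ?_
  rw [min_eq_right (by exact_mod_cast (Finset.mem_Icc.1 hk).1)]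
  ring

lemma sum_min_sub_add_one_mul_of_lt (n : ℕ → ℤ) {a h i : ℕ} (hai : a < i) (hah : a ≤ h) :
    ∑ k ∈ Finset.Icc a h, ((min k i : ℤ) - a + 1) * n k =
      ∑ k ∈ Finset.Icc (a + 1) h, ((min k i : ℤ) - ↑(a + 1) + 1) * n k +
        ∑ k ∈ Finset.Icc a h, n k := by
  rw [sum_Icc_eq_add_sum_Icc_succ _ hah, sum_Icc_eq_add_sum_Icc_succ n hah,
    min_eq_left (by exact_mod_cast hai.le : (a : ℤ) ≤ i)]
  have hshift : ∑ k ∈ Finset.Icc (a + 1) h, ((min k i : ℤ) - a + 1) * n k =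
      ∑ k ∈ Finset.Icc (a + 1) h, ((min k i : ℤ) - ↑(a + 1) + 1) * n k +
        ∑ k ∈ Finset.Icc (a + 1) h, n k := by
    rw [← Finset.sum_add_distrib]
    refine Finset.sum_congr rfl fun k _ => ?_
    push_cast
    ring
  rw [hshift]
  ring

lemma Mrec_pairwise (J : ℕ → List ℤ) (h k : ℕ) : (Mrec J h k).Pairwise (· ≤ ·) := by
  induction k with
  | zero => exact List.Pairwise.nil
  | succ k ih => exact Phi1_pairwise (OmegaL_pairwise _ ih)

lemma Mrec_sub_of_le (J : ℕ → List ℤ) {h a : ℕ} (hah : a ≤ h) :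
    Mrec J h (h + 1 - a) = Phi1 (OmegaL (J a) (Mrec J h (h + 1 - (a + 1)))) := by
  obtain ⟨d, rfl⟩ := Nat.exists_eq_add_of_le hah
  rw [show a + d + 1 - a = d + 1 by omega, show a + d + 1 - (a + 1) = d by omega, Mrec,
    Nat.add_sub_cancel]

lemma Mrec_length (J : ℕ → List ℤ) {h a : ℕ} (ha : a ≤ h + 1) :
    (Mrec J h (h + 1 - a)).length = 2 * ∑ k ∈ Finset.Icc a h, (J k).length := by
  induction ha using Nat.decreasingInduction with
  | self => simp [Mrec]
  | of_succ a ha ih =>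
    rw [Mrec_sub_of_le J (by omega), Phi1_length, OmegaL_length, ih,
      sum_Icc_eq_add_sum_Icc_succ _ (by omega : a ≤ h)]
    ring

theorem maximum_Mrec (J : ℕ → List ℤ) {h a : ℕ} (ha : a ≤ h + 1) :
    (Mrec J h (h + 1 - a)).maximum =
      (Finset.Icc a h).sup fun i => (J i).maximum +
        ↑(2 * ∑ k ∈ Finset.Icc a h, ((min k i : ℤ) - a + 1) * (J k).length) := by
  induction ha using Nat.decreasingInduction with
  | self => simp [Mrec]
  | of_succ a ha ih =>
    have hah : a ≤ h := by omega
    set N : ℤ := ∑ k ∈ Finset.Icc a h, ((J k).length : ℤ)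
    have hlen : ((OmegaL (J a) (Mrec J h (h + 1 - (a + 1)))).length : ℤ) = 2 * N := by
      rw [OmegaL_length, Mrec_length J (a := a + 1) ha]
      simp only [N, sum_Icc_eq_add_sum_Icc_succ _ hah]
      push_cast
      ring
    have hshift : ∀ i ∈ Finset.Icc (a + 1) h,
        (J i).maximum +
            ↑(2 * ∑ k ∈ Finset.Icc a h, ((min k i : ℤ) - a + 1) * (J k).length) =
          ((J i).maximum +
            ↑(2 * ∑ k ∈ Finset.Icc (a + 1) h,
              ((min k i : ℤ) - ↑(a + 1) + 1) * (J k).length)) + ↑(2 * N) := by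
      intro i hi
      rw [sum_min_sub_add_one_mul_of_lt _ (Finset.mem_Icc.1 hi).1 hah, add_assoc,
        ← WithBot.coe_add, mul_add]
    rw [Mrec_sub_of_le J hah, maximum_Phi1 (OmegaL_pairwise _ (Mrec_pairwise J h _)),
      maximum_OmegaL, ih, hlen, ← Finset.insert_Icc_add_one_left_eq_Icc hah, Finset.sup_insert,
      Finset.insert_Icc_add_one_left_eq_Icc hah, sum_min_sub_add_one_mul_self,
      Finset.sup_congr rfl hshift, ← Finset.sup_add_coe, max_add_add_right]

theorem lowerRight_Mrec_general (h : ℕ) (m : ℕ → ℕ) (J : ℕ → List ℤ)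
    (hlen : ∀ i, (J i).length = m i) (hsort : ∀ i, (J i).Pairwise (· ≤ ·))
    (hmh : m h ≠ 0) (a : ℕ) (hah : a ≤ h) :
    (Mrec J h (h + 1 - a)).getLast? =
      some (((Finset.Icc a h).filter (fun i => m i ≠ 0)).sup'
        ⟨h, Finset.mem_filter.2 ⟨Finset.mem_Icc.2 ⟨hah, le_refl h⟩, hmh⟩⟩
        (fun i => (J i).getLast?.getD 0 +
          2 * ∑ k ∈ Finset.Icc a h, ((min k i : ℤ) - (a : ℤ) + 1) * (m k : ℤ))) := by
  have hmax := maximum_Mrec J (h := h) (a := a) (by omega)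
  rw [(Mrec_pairwise J h _).maximum_eq_getLast?] at hmax
  refine hmax.trans ?_
  -- `Option ℤ` is `WithBot ℤ` by definition
  change _ = ((_ : ℤ) : WithBot ℤ)
  have hne : ∀ i, J i ≠ [] ↔ m i ≠ 0 := fun i => by
    rw [← hlen i, Ne, Ne, List.length_eq_zero_iff]
  simp only [(hsort _).maximum_eq_ite 0, hne, hlen, ite_add, WithBot.bot_add,
    ← WithBot.coe_add]
  rw [Finset.sup_ite, Finset.sup_bot, sup_bot_eq]
  exact (Finset.coe_sup' _ _).symm

/-- Lower-right entry of `M_a`: for a partition `λ = (1^{m_1} ⋯ h^{m_h})` with `m_h > 0`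
and weakly increasing riggings `J^i` of lengths `m_i`, for `1 ≤ a ≤ h`, the last entry of
`M_a` (the lower-right matrix entry) equals
`max_{i ≥ a, m_i > 0} (J^i_{m_i} + 2·∑_{k=a}^h (min(k,i)−a+1)·m_k)`. -/
theorem lowerRight_Mrec (h : ℕ) (m : ℕ → ℕ) (J : ℕ → List ℤ)
    (hlen : ∀ i, (J i).length = m i) (hsort : ∀ i, (J i).Pairwise (· ≤ ·))
    (hmh : m h ≠ 0) (a : ℕ) (ha1 : 1 ≤ a) (hah : a ≤ h) :
    (Mrec J h (h + 1 - a)).getLast? =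
      some (((Finset.Icc a h).filter (fun i => m i ≠ 0)).sup'
        ⟨h, Finset.mem_filter.2 ⟨Finset.mem_Icc.2 ⟨hah, le_refl h⟩, hmh⟩⟩
        (fun i => (J i).getLast?.getD 0 +
          2 * ∑ k ∈ Finset.Icc a h, ((min k i : ℤ) - (a : ℤ) + 1) * (m k : ℤ))) :=
  lowerRight_Mrec_general h m J hlen hsort hmh a hah
end

section
/- With the same recursive construction M_a = Φ_1(Ω_{J^a}(M_{a+1})), M_{h+1} empty, the upper-left (first top-row) entry of M_a equals min over i ≥ a with m_i > 0 of (J^i_1 + i − a + 1), for 1 ≤ a ≤ h. -/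
/-!
`Φ_1` raises the first entry of a reading sequence by one, and inserting the elements of a
sorted rigging `X` makes the new first entry the minimum of `X_1` and the old one. Hence the
upper-left entry of `M_a` is `min(J^a_1, upper-left entry of M_{a+1}) + 1`, and unwinding this
recursion from the empty `M_{h+1}` gives the minimum. Reading first entries in `WithTop ℤ`, with
`⊤` for an empty list, lets empty riggings and the empty `M_{h+1}` take part in the recursion
uniformly.
-/

lemma Finset.inf_filter_of_forall_not_eq_top {ι α : Type*} [SemilatticeInf α] [OrderTop α]
    {s : Finset ι} {p : ι → Prop} [DecidablePred p] {f : ι → α}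
    (hf : ∀ i ∈ s, ¬p i → f i = ⊤) :
    (s.filter p).inf f = s.inf f := by
  rw [← inf_top_eq ((s.filter p).inf f), ← Finset.inf_top (s.filter (¬p ·)),
    ← Finset.inf_ite]
  exact Finset.inf_congr rfl fun i hi => by split_ifs with hp <;> simp [hf i hi, hp]

namespace List

variable {α : Type*}

def headTop (l : List α) : WithTop α := l.head?

@[simp] lemma headTop_nil : ([] : List α).headTop = ⊤ := rfl

@[simp] lemma headTop_cons (x : α) (l : List α) : (x :: l).headTop = x := rfl

lemma headTop_eq_coe_iff {l : List α} {x : α} : l.headTop = x ↔ l.head? = some x := Iff.rfl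

variable [LinearOrder α]

lemma headTop_orderedInsert (x : α) (l : List α) :
    (l.orderedInsert (· ≤ ·) x).headTop = min ↑x l.headTop := by
  cases l with
  | nil => simp
  | cons y t =>
    by_cases hxy : x ≤ y
    · simp [hxy]
    · simp [hxy, le_of_not_ge hxy]

lemma coe_le_headTop_of_pairwise_cons {x : α} {l : List α} (hl : (x :: l).Pairwise (· ≤ ·)) :
    ↑x ≤ l.headTop := by
  cases l with
  | nil => simp
  | cons y t => exact WithTop.coe_le_coe.2 (rel_of_pairwise_cons hl mem_cons_self)

end List

open List

lemma headTop_OmegaL {X : List ℤ} (hX : X.Pairwise (· ≤ ·)) (l : List ℤ) :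
    (OmegaL X l).headTop = min X.headTop l.headTop := by
  induction X with
  | nil => simp [OmegaL]
  | cons x X ih =>
    change (((OmegaL X l).orderedInsert _ x).orderedInsert _ x).headTop = _
    rw [headTop_orderedInsert, headTop_orderedInsert, ih hX.of_cons, ← min_assoc,
      min_self, ← min_assoc, min_eq_left (coe_le_headTop_of_pairwise_cons hX), headTop_cons]

lemma headTop_Phi1 (l : List ℤ) : (Phi1 l).headTop = l.headTop + 1 := by
  cases l <;> simp [Phi1]

lemma Mrec_add_one_sub {J : ℕ → List ℤ} {h a : ℕ} (hah : a ≤ h) :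
    Mrec J h (h + 1 - a) = Phi1 (OmegaL (J a) (Mrec J h (h + 1 - (a + 1)))) := by
  obtain ⟨k, rfl⟩ := Nat.exists_eq_add_of_le hah
  rw [show a + k + 1 - a = k + 1 by omega, show a + k + 1 - (a + 1) = k by omega, Mrec,
    Nat.add_sub_cancel]

lemma headTop_Mrec (J : ℕ → List ℤ) (hsort : ∀ i, (J i).Pairwise (· ≤ ·)) {h a : ℕ}
    (ha : a ≤ h + 1) :
    (Mrec J h (h + 1 - a)).headTop =
      (Finset.Icc a h).inf fun i => (J i).headTop + ((i - a + 1 : ℤ) : WithTop ℤ) := by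
  induction ha using Nat.decreasingInduction with
  | self => simp [Mrec]
  | of_succ a hah ih =>
    have hshift : (Finset.Icc (a + 1) h).inf
          (fun i => (J i).headTop + ((i - (a + 1 : ℕ) + 1 : ℤ) : WithTop ℤ)) + 1 =
        (Finset.Icc (a + 1) h).inf fun i => (J i).headTop + ((i - a + 1 : ℤ) : WithTop ℤ) := by
      rw [Finset.apply_inf_eq_inf_comp_of_linearOrder (· + 1)
        (fun _ _ hxy => add_le_add_left hxy 1) (WithTop.top_add 1)]
      refine Finset.inf_congr rfl fun i _ => ?_
      rw [Function.comp_apply, add_assoc, ← WithTop.coe_one, ← WithTop.coe_add]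
      congr 2
      push_cast
      ring
    rw [Mrec_add_one_sub (Nat.lt_succ_iff.1 hah), headTop_Phi1, headTop_OmegaL (hsort a), ih,
      ← min_add_add_right, hshift, ← Finset.Ioc_insert_left (Nat.lt_succ_iff.1 hah),
      ← Finset.Icc_add_one_left_eq_Ioc, Finset.inf_insert]
    simp

theorem upperLeft_Mrec_general (h : ℕ) (m : ℕ → ℕ) (J : ℕ → List ℤ)
    (hlen : ∀ i, (J i).length = m i) (hsort : ∀ i, (J i).Pairwise (· ≤ ·))
    (hmh : m h ≠ 0) (a : ℕ) (hah : a ≤ h) :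
    (Mrec J h (h + 1 - a)).head? =
      some (((Finset.Icc a h).filter (fun i => m i ≠ 0)).inf'
        ⟨h, Finset.mem_filter.2 ⟨Finset.mem_Icc.2 ⟨hah, le_refl h⟩, hmh⟩⟩
        (fun i => (J i).head?.getD 0 + (i : ℤ) - (a : ℤ) + 1)) := by
  -- the anonymous-constructor proof of nonemptiness blocks rewriting with `Finset.coe_inf'`
  generalize_proofs
  have hJ_nil : ∀ i, J i = [] ↔ m i = 0 := fun i => by rw [← hlen, List.length_eq_zero_iff]
  rw [← headTop_eq_coe_iff, headTop_Mrec J hsort (by omega), Finset.coe_inf',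
    ← Finset.inf_filter_of_forall_not_eq_top (p := fun i => m i ≠ 0) fun i _ hi => by
      simp [(hJ_nil i).2 (not_not.1 hi)]]
  refine Finset.inf_congr rfl fun i hi => ?_
  obtain ⟨x, t, hx⟩ := List.exists_cons_of_ne_nil ((hJ_nil i).not.2 (Finset.mem_filter.1 hi).2)
  rw [Function.comp_apply, hx, headTop_cons, ← WithTop.coe_add]
  simp only [List.head?_cons, Option.getD_some, WithTop.coe_inj]
  ring

/-- Upper-left entry of `M_a`: for a partition `λ = (1^{m_1} ⋯ h^{m_h})` with `m_h > 0`
and weakly increasing riggings `J^i` of lengths `m_i`, for `1 ≤ a ≤ h`, the first entry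
of `M_a` (the upper-left matrix entry) equals `min_{i ≥ a, m_i > 0} (J^i_1 + i − a + 1)`. -/
theorem upperLeft_Mrec (h : ℕ) (m : ℕ → ℕ) (J : ℕ → List ℤ)
    (hlen : ∀ i, (J i).length = m i) (hsort : ∀ i, (J i).Pairwise (· ≤ ·))
    (hmh : m h ≠ 0) (a : ℕ) (ha1 : 1 ≤ a) (hah : a ≤ h) :
    (Mrec J h (h + 1 - a)).head? =
      some (((Finset.Icc a h).filter (fun i => m i ≠ 0)).inf'
        ⟨h, Finset.mem_filter.2 ⟨Finset.mem_Icc.2 ⟨hah, le_refl h⟩, hmh⟩⟩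
        (fun i => (J i).head?.getD 0 + (i : ℤ) - (a : ℤ) + 1)) :=
  upperLeft_Mrec_general h m J hlen hsort hmh a hah
end
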